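/- Let f : {-1,1}^n → {-1,1}, let 𝒞 be a partition of {-1,1}^n into subcubes such that f is constant on each subcube, and let 𝒯 ⊆ 𝒞 be a subfamily whose union covers at least a (1−δ) fraction of {-1,1}^n, i.e. Σ_{C ∈ 𝒯} 2^{−codim(C)} ≥ 1−δ. Let ℬ = { S ⊆ [n] : S ⊆ fixed(C) for some C ∈ 𝒯 }, where fixed(C) is the set of coordinates fixed by the subcube C. Then the Fourier weight of f outside ℬ is small: Σ_{S ∉ ℬ} f̂(S)² ≤ δ. -/

import Mathlib

open Finset

/-- The real value (`1` or `-1`) encoded by a Boolean. -/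
noncomputable def bsgn (b : Bool) : ℝ := if b then 1 else -1

/-- The character `χ_S(x) = ∏_{i ∈ S} x_i` on the hypercube `{-1,1}^n`. -/
noncomputable def chi {n : ℕ} (S : Finset (Fin n)) (x : Fin n → Bool) : ℝ :=
  ∏ i ∈ S, bsgn (x i)

/-- The Fourier coefficient `f̂(S) = E_x [f(x)·χ_S(x)]`. -/
noncomputable def fCoeff {n : ℕ} (f : (Fin n → Bool) → ℝ) (S : Finset (Fin n)) : ℝ :=
  (∑ x : Fin n → Bool, f x * chi S x) / 2 ^ n

/-- The Fourier (Shannon) entropy `H(f̂²) = Σ_S f̂(S)² log₂(1/f̂(S)²)`. -/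
noncomputable def fEntropy {n : ℕ} (f : (Fin n → Bool) → ℝ) : ℝ :=
  ∑ S : Finset (Fin n), (fCoeff f S) ^ 2 * Real.logb 2 (1 / (fCoeff f S) ^ 2)

/-- The Fourier min-entropy `H_∞(f̂²) = min_{S : f̂(S) ≠ 0} log₂(1/f̂(S)²)`. -/
noncomputable def fMinEntropy {n : ℕ} (f : (Fin n → Bool) → ℝ) : ℝ :=
  sInf {y : ℝ | ∃ S : Finset (Fin n),
    fCoeff f S ≠ 0 ∧ y = Real.logb 2 (1 / (fCoeff f S) ^ 2)}

/-- The total influence `Inf(f) = Σ_S |S|·f̂(S)²`. -/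
noncomputable def totalInf {n : ℕ} (f : (Fin n → Bool) → ℝ) : ℝ :=
  ∑ S : Finset (Fin n), (S.card : ℝ) * (fCoeff f S) ^ 2

/-- `f` is a Boolean (`±1`-valued) function. -/
def IsBooleanFunc {n : ℕ} (f : (Fin n → Bool) → ℝ) : Prop := ∀ x, f x = 1 ∨ f x = -1

/-!
Let `U` be the union of the cubes of `𝒯` and `g = f · 1_{U^c}`. If `S ∉ ℬ`, every cube `C ∈ 𝒯`
leaves some coordinate of `S` free, so `χ_S` sums to zero over `C` while `f` is constant on it;
hence `f̂(S) = ĝ(S)`. By Parseval the weight of `f̂` outside `ℬ` is at most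
`E[g²] = Pr[x ∉ U] = 1 - Σ_{C ∈ 𝒯} 2^{-codim C} ≤ δ`, where the cubes of `𝒯` are disjoint
because `𝒞` is a partition.
-/

lemma bsgn_mul_self (b : Bool) : bsgn b * bsgn b = 1 := by cases b <;> simp [bsgn]

lemma bsgn_not (b : Bool) : bsgn (!b) = -bsgn b := by cases b <;> simp [bsgn]

lemma chi_update_not {n : ℕ} {S : Finset (Fin n)} {j : Fin n} (hj : j ∈ S) (x : Fin n → Bool) :
    chi S (Function.update x j (!x j)) = -chi S x := by
  rw [chi, chi, ← mul_prod_erase S _ hj, ← mul_prod_erase S _ hj, Function.update_self,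
    bsgn_not, neg_mul]
  congr 2
  exact prod_congr rfl fun i hi => by rw [Function.update_of_ne (ne_of_mem_erase hi)]

lemma sum_chi_mul_chi {n : ℕ} (x y : Fin n → Bool) :
    ∑ S : Finset (Fin n), chi S x * chi S y = if x = y then (2 : ℝ) ^ n else 0 := by
  have hprod : ∑ S : Finset (Fin n), chi S x * chi S y
      = ∏ i : Fin n, (bsgn (x i) * bsgn (y i) + 1) := by
    rw [prod_add, ← powerset_univ]
    refine sum_congr rfl fun S _ => ?_
    rw [chi, chi, ← prod_mul_distrib, prod_const_one, mul_one]
  rw [hprod]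
  split_ifs with hxy
  · subst hxy
    simp [bsgn_mul_self, one_add_one_eq_two]
  · obtain ⟨i, hi⟩ := Function.ne_iff.1 hxy
    apply prod_eq_zero (mem_univ i)
    cases hx : x i <;> cases hy : y i <;> simp_all [bsgn]

lemma sum_fCoeff_sq {n : ℕ} (g : (Fin n → Bool) → ℝ) :
    ∑ S : Finset (Fin n), fCoeff g S ^ 2 = (∑ x : Fin n → Bool, g x ^ 2) / 2 ^ n := by
  calc ∑ S : Finset (Fin n), fCoeff g S ^ 2
      = (∑ S : Finset (Fin n), ∑ x, ∑ y, g x * g y * (chi S x * chi S y)) / (2 ^ n * 2 ^ n) := by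
        simp_rw [fCoeff, div_pow, sq, sum_mul_sum, ← sum_div]
        exact congrArg (· / _) (sum_congr rfl fun S _ =>
          sum_congr rfl fun x _ => sum_congr rfl fun y _ => by ring)
    _ = (∑ x, ∑ y, g x * g y * ∑ S : Finset (Fin n), chi S x * chi S y) / (2 ^ n * 2 ^ n) := by
        simp_rw [mul_sum]
        rw [sum_comm]
        exact congrArg (· / _) (sum_congr rfl fun x _ => sum_comm)
    _ = (∑ x : Fin n → Bool, g x ^ 2) / 2 ^ n := by
        simp only [sum_chi_mul_chi, mul_ite, mul_zero, sum_ite_eq, mem_univ, if_true]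
        rw [← sum_mul]
        field_simp

def subcube {n : ℕ} (d : Finset (Fin n)) (v : Fin n → Bool) : Finset (Fin n → Bool) :=
  univ.filter fun x => ∀ j ∈ d, x j = v j

@[simp]
lemma mem_subcube {n : ℕ} {d : Finset (Fin n)} {v x : Fin n → Bool} :
    x ∈ subcube d v ↔ ∀ j ∈ d, x j = v j := by
  simp [subcube]

lemma card_subcube {n : ℕ} (d : Finset (Fin n)) (v : Fin n → Bool) :
    #(subcube d v) = 2 ^ (n - #d) := by
  classical
  have hpi : subcube d v = Fintype.piFinset fun j => if j ∈ d then {v j} else univ := by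
    ext x
    simp only [mem_subcube, Fintype.mem_piFinset]
    refine forall_congr' fun j => ?_
    split_ifs <;> simp [*]
  rw [hpi, Fintype.card_piFinset]
  simp only [apply_ite card, card_singleton, card_univ, Fintype.card_bool]
  rw [prod_ite, prod_const_one, one_mul, prod_const, filter_not, card_sdiff]
  simp

lemma card_subcube_div {n : ℕ} (d : Finset (Fin n)) (v : Fin n → Bool) :
    (#(subcube d v) : ℝ) / 2 ^ n = 2 ^ (-(#d : ℤ)) := by
  have hd : #d ≤ n := by simpa using card_le_univ d
  have hsplit : (2 : ℝ) ^ n = 2 ^ (n - #d) * 2 ^ #d := by rw [← pow_add, Nat.sub_add_cancel hd]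
  rw [card_subcube, zpow_neg, zpow_natCast, Nat.cast_pow, Nat.cast_ofNat, hsplit]
  field_simp

lemma sum_chi_subcube_eq_zero {n : ℕ} {S d : Finset (Fin n)} (hS : ¬S ⊆ d) (v : Fin n → Bool) :
    ∑ x ∈ subcube d v, chi S x = 0 := by
  obtain ⟨j, hjS, hjd⟩ := not_subset.1 hS
  have hflip_mem : ∀ x ∈ subcube d v, Function.update x j (!x j) ∈ subcube d v := by
    intro x hx
    rw [mem_subcube] at hx ⊢
    intro k hk
    rw [Function.update_of_ne (ne_of_mem_of_not_mem hk hjd)]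
    exact hx k hk
  refine sum_involution (fun x _ => Function.update x j (!x j)) ?_ ?_ hflip_mem ?_
  · intro x _
    rw [chi_update_not hjS, add_neg_cancel]
  · intro x _ _ h
    simpa using congrFun h j
  · intro x _
    simp

lemma sum_mul_chi_subcube_eq_zero {n : ℕ} {S d : Finset (Fin n)} {v : Fin n → Bool}
    {f : (Fin n → Bool) → ℝ} (hf : ∀ x ∈ subcube d v, f x = f v) (hS : ¬S ⊆ d) :
    ∑ x ∈ subcube d v, f x * chi S x = 0 := by
  rw [sum_congr rfl fun x hx => by rw [hf x hx], ← mul_sum, sum_chi_subcube_eq_zero hS,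
    mul_zero]

lemma fCoeff_ite_mem {n : ℕ} (f : (Fin n → Bool) → ℝ) (U : Finset (Fin n → Bool))
    (S : Finset (Fin n)) :
    fCoeff (fun x => if x ∈ U then 0 else f x) S
      = fCoeff f S - (∑ x ∈ U, f x * chi S x) / 2 ^ n := by
  have hsplit : ∀ x, (if x ∈ U then 0 else f x) * chi S x
      = f x * chi S x - if x ∈ U then f x * chi S x else 0 := by
    intro x
    split_ifs <;> ring
  simp only [fCoeff, hsplit, sum_sub_distrib, sum_ite_mem, univ_inter, sub_div]

lemma sum_sq_ite_mem {n : ℕ} {f : (Fin n → Bool) → ℝ} (hf : IsBooleanFunc f)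
    (U : Finset (Fin n → Bool)) :
    ∑ x, (if x ∈ U then 0 else f x) ^ 2 = 2 ^ n - #U := by
  have hsq : ∀ x, (if x ∈ U then 0 else f x) ^ 2 = 1 - if x ∈ U then 1 else 0 := by
    intro x
    split_ifs
    · simp
    · rcases hf x with h | h <;> simp [h]
  simp [hsq, sum_sub_distrib]

/-- Let `𝒞` be a partition of `{-1,1}^n` into monochromatic subcubes
(cube `i` fixing the coordinates in `dom i` to values `val i`), and let `𝒯 ⊆ 𝒞` cover at
least a `(1-δ)` fraction of the cube, i.e. `Σ_{i ∈ 𝒯} 2^{-|dom i|} ≥ 1-δ`.  With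
`ℬ = {S : S ⊆ dom i for some i ∈ 𝒯}`, the Fourier weight outside `ℬ` satisfies
`Σ_{S ∉ ℬ} f̂(S)² ≤ δ`. -/
theorem stmt10 {n t : ℕ} (f : (Fin n → Bool) → ℝ) (hf : IsBooleanFunc f)
    (dom : Fin t → Finset (Fin n)) (val : Fin t → Fin n → Bool)
    (hpart : ∀ x : Fin n → Bool, ∃! i : Fin t, ∀ j ∈ dom i, x j = val i j)
    (hmono : ∀ i : Fin t, ∀ x y : Fin n → Bool,
      (∀ j ∈ dom i, x j = val i j) → (∀ j ∈ dom i, y j = val i j) → f x = f y)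
    (𝒯 : Finset (Fin t)) (δ : ℝ)
    (hcover : 1 - δ ≤ ∑ i ∈ 𝒯, (2 : ℝ) ^ (-((dom i).card : ℤ))) :
    ∑ S ∈ Finset.univ.filter (fun S : Finset (Fin n) => ¬ ∃ i ∈ 𝒯, S ⊆ dom i),
      (fCoeff f S) ^ 2 ≤ δ := by
  classical
  set cube := fun i => subcube (dom i) (val i)
  set U := 𝒯.biUnion cube
  set g : (Fin n → Bool) → ℝ := fun x => if x ∈ U then 0 else f x
  have hdisj : (𝒯 : Set (Fin t)).PairwiseDisjoint cube := fun i _ i' _ hne =>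
    disjoint_left.2 fun x hx hx' =>
      hne ((hpart x).unique (mem_subcube.1 hx) (mem_subcube.1 hx'))
  have hcoeff : ∀ S : Finset (Fin n), (¬∃ i ∈ 𝒯, S ⊆ dom i) → fCoeff f S = fCoeff g S := by
    intro S hS
    rw [fCoeff_ite_mem, sum_biUnion hdisj, sum_eq_zero fun i hi =>
      sum_mul_chi_subcube_eq_zero (fun x hx => hmono i x (val i) (mem_subcube.1 hx) fun _ _ => rfl)
        fun h => hS ⟨i, hi, h⟩, zero_div, sub_zero]
  have hcardU : (#U : ℝ) / 2 ^ n = ∑ i ∈ 𝒯, (2 : ℝ) ^ (-((dom i).card : ℤ)) := by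
    rw [card_biUnion hdisj, Nat.cast_sum, sum_div]
    exact sum_congr rfl fun i _ => card_subcube_div _ _
  calc ∑ S ∈ univ.filter (fun S : Finset (Fin n) => ¬∃ i ∈ 𝒯, S ⊆ dom i), fCoeff f S ^ 2
      = ∑ S ∈ univ.filter (fun S : Finset (Fin n) => ¬∃ i ∈ 𝒯, S ⊆ dom i), fCoeff g S ^ 2 :=
        sum_congr rfl fun S hS => by rw [hcoeff S (mem_filter.1 hS).2]
    _ ≤ ∑ S, fCoeff g S ^ 2 := sum_le_univ_sum_of_nonneg fun _ => sq_nonneg _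
    _ = 1 - #U / 2 ^ n := by
        rw [sum_fCoeff_sq, sum_sq_ite_mem hf]
        field_simp
    _ ≤ δ := by linarith
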